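/- Let (X,d) be a nonempty metric space, let (E,ρ) be a hyperconvex metric space, and let ι : X → E be an isometric embedding. Then there exists an isometric embedding J : T(X) → E of the tight span of X into E satisfying J(f_x) = ι(x) for every x ∈ X, where f_x = d(x,·) is the canonical image of x in T(X). -/
import Mathlib


universe u

/-- The tight span of a metric space `X`. -/
def TightSpan (X : Type*) [MetricSpace X] : Set (X → ℝ) :=
  {f | (∀ x y, dist x y ≤ f x + f y) ∧ ∀ x, (⨅ y, (f x + f y - dist x y)) = 0}

/-- A metric space `E` is hyperconvex if for every family of points and nonnegative
radii with `dist (x i) (x j) ≤ r i + r j` for all `i, j`, the closed balls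
`B̄(x i, r i)` have a common point. -/
def Hyperconvex (E : Type u) [MetricSpace E] : Prop :=
  ∀ (ι : Type u) (x : ι → E) (r : ι → ℝ), (∀ i, 0 ≤ r i) →
    (∀ i j, dist (x i) (x j) ≤ r i + r j) → ∃ z, ∀ i, dist z (x i) ≤ r i

section helpers

variable {X : Type*} [MetricSpace X] [Nonempty X]

lemma ts_nonneg {f : X → ℝ} (hf : f ∈ TightSpan X) (x : X) : 0 ≤ f x := by
  have h := hf.1 x x
  simp only [dist_self] at h
  linarith

lemma ts_exists {f : X → ℝ} (hf : f ∈ TightSpan X) (x : X) {ε : ℝ} (hε : 0 < ε) :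
    ∃ y, f x + f y - dist x y < ε := by
  have h : (⨅ y, (f x + f y - dist x y)) < ε := by rw [hf.2 x]; exact hε
  exact exists_lt_of_ciInf_lt h

lemma ts_lip {f : X → ℝ} (hf : f ∈ TightSpan X) (x y : X) : f x ≤ dist x y + f y := by
  refine le_of_forall_pos_le_add fun ε hε => ?_
  obtain ⟨z, hz⟩ := ts_exists hf x hε
  have h1 : dist x z ≤ dist x y + dist y z := dist_triangle x y z
  have h2 : dist y z ≤ f y + f z := hf.1 y z
  linarith

lemma ts_bdd {f g : X → ℝ} (hf : f ∈ TightSpan X) (hg : g ∈ TightSpan X) :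
    BddAbove (Set.range fun x => |f x - g x|) := by
  obtain ⟨x₀⟩ := ‹Nonempty X›
  refine ⟨f x₀ + g x₀, ?_⟩
  rintro _ ⟨x, rfl⟩
  rw [abs_sub_le_iff]
  have hfl := ts_lip hf x x₀
  have hgl := ts_lip hg x x₀
  have hfd := hf.1 x x₀
  have hgd := hg.1 x x₀
  constructor <;> linarith

lemma ts_abs_le {f g : X → ℝ} (hf : f ∈ TightSpan X) (hg : g ∈ TightSpan X) (x : X) :
    |f x - g x| ≤ ⨆ x, |f x - g x| :=
  le_ciSup (ts_bdd hf hg) x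

lemma ts_D_nonneg {f g : X → ℝ} (hf : f ∈ TightSpan X) (hg : g ∈ TightSpan X) :
    0 ≤ ⨆ x, |f x - g x| :=
  le_trans (abs_nonneg _) (ts_abs_le hf hg (Classical.arbitrary X))

end helpers

theorem stmt15 {X : Type*} [MetricSpace X] [Nonempty X]
    {E : Type u} [MetricSpace E] (hE : Hyperconvex E)
    (ι : X → E) (hι : Isometry ι) :
    ∃ J : (X → ℝ) → E,
      (∀ f ∈ TightSpan X, ∀ g ∈ TightSpan X,
        dist (J f) (J g) = ⨆ x, |f x - g x|) ∧
      ∀ x : X, J (fun z => dist x z) = ι x := by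
  classical
  haveI : Nonempty E := ⟨ι (Classical.arbitrary X)⟩
  set S : Set (Set ((X → ℝ) × E)) :=
    {G | (∀ p ∈ G, p.1 ∈ TightSpan X) ∧
         (∀ p ∈ G, ∀ x, dist p.2 (ι x) ≤ p.1 x) ∧
         (∀ p ∈ G, ∀ q ∈ G, dist p.2 q.2 ≤ ⨆ x, |p.1 x - q.1 x|)} with hS
  have hchain : ∀ c ⊆ S, IsChain (· ⊆ ·) c → ∃ ub ∈ S, ∀ s ∈ c, s ⊆ ub := by
    intro c hcS hchain
    refine ⟨⋃₀ c, ⟨?_, ?_, ?_⟩, fun s hs => Set.subset_sUnion_of_mem hs⟩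
    · rintro p ⟨t, htc, hpt⟩; exact (hcS htc).1 p hpt
    · rintro p ⟨t, htc, hpt⟩; exact (hcS htc).2.1 p hpt
    · rintro p ⟨t, htc, hpt⟩ q ⟨t', htc', hqt'⟩
      rcases hchain.total htc htc' with h | h
      · exact (hcS htc').2.2 p (h hpt) q hqt'
      · exact (hcS htc).2.2 p hpt q (h hqt')
  obtain ⟨G, hGmax⟩ := zorn_subset S hchain
  have hGS : G ∈ S := hGmax.1
  -- totality of the maximal graph
  have htot : ∀ f ∈ TightSpan X, ∃ z, (f, z) ∈ G := by
    intro f hf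
    by_contra hne
    push_neg at hne
    set D : (X → ℝ) → ℝ := fun g => ⨆ x, |f x - g x| with hD
    have key : ∃ z : E, (∀ x, dist z (ι x) ≤ f x) ∧ ∀ q ∈ G, dist z q.2 ≤ D q.1 := by
      have h1 : ∀ i : {pr : E × ℝ // (∃ x, pr = (ι x, f x)) ∨ ∃ q ∈ G, pr = (q.2, D q.1)},
          0 ≤ (i.1.2 : ℝ) := by
        rintro ⟨pr, (⟨x, rfl⟩ | ⟨q, hq, rfl⟩)⟩
        · exact ts_nonneg hf x
        · exact ts_D_nonneg hf (hGS.1 q hq)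
      have h2 : ∀ i j : {pr : E × ℝ // (∃ x, pr = (ι x, f x)) ∨ ∃ q ∈ G, pr = (q.2, D q.1)},
          dist i.1.1 j.1.1 ≤ i.1.2 + j.1.2 := by
        rintro ⟨pr, (⟨x, rfl⟩ | ⟨q, hq, rfl⟩)⟩ ⟨pr', (⟨y, rfl⟩ | ⟨q', hq', rfl⟩)⟩
        · simpa [hι.dist_eq] using hf.1 x y
        · have k1 : dist q'.2 (ι x) ≤ q'.1 x := hGS.2.1 q' hq' x
          have k2 : |f x - q'.1 x| ≤ D q'.1 := ts_abs_le hf (hGS.1 q' hq') x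
          have k3 : q'.1 x - f x ≤ |f x - q'.1 x| := by
            rw [abs_sub_comm]; exact le_abs_self _
          dsimp only
          rw [dist_comm]
          linarith
        · have h1 : dist q.2 (ι y) ≤ q.1 y := hGS.2.1 q hq y
          have h2 : |f y - q.1 y| ≤ D q.1 := ts_abs_le hf (hGS.1 q hq) y
          have h3 : q.1 y - f y ≤ |f y - q.1 y| := by
            rw [abs_sub_comm]; exact le_abs_self _
          dsimp only
          linarith
        · have h1 : dist q.2 q'.2 ≤ ⨆ x, |q.1 x - q'.1 x| := hGS.2.2 q hq q' hq'
          have h2 : (⨆ x, |q.1 x - q'.1 x|) ≤ D q.1 + D q'.1 := by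
            refine ciSup_le fun x => ?_
            calc |q.1 x - q'.1 x| ≤ |q.1 x - f x| + |f x - q'.1 x| := abs_sub_le _ _ _
              _ ≤ D q.1 + D q'.1 := by
                  rw [abs_sub_comm]
                  exact add_le_add (ts_abs_le hf (hGS.1 q hq) x)
                    (ts_abs_le hf (hGS.1 q' hq') x)
          dsimp only
          linarith
      obtain ⟨z, hz⟩ := hE {pr : E × ℝ // (∃ x, pr = (ι x, f x)) ∨ ∃ q ∈ G, pr = (q.2, D q.1)}
        (fun i => i.1.1) (fun i => i.1.2) h1 h2
      exact ⟨z, fun x => hz ⟨(ι x, f x), Or.inl ⟨x, rfl⟩⟩,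
        fun q hq => hz ⟨(q.2, D q.1), Or.inr ⟨q, hq, rfl⟩⟩⟩
    obtain ⟨z, hz1, hz2⟩ := key
    have hG' : insert (f, z) G ∈ S := by
      refine ⟨?_, ?_, ?_⟩
      · rintro p (rfl | hp)
        · exact hf
        · exact hGS.1 p hp
      · rintro p (rfl | hp)
        · exact hz1
        · exact hGS.2.1 p hp
      · rintro p (rfl | hp) q (rfl | hq)
        · simpa using ts_D_nonneg hf hf
        · exact hz2 q hq
        · have h := hz2 p hp
          rw [dist_comm] at h
          refine h.trans (le_of_eq ?_)
          show (⨆ x, |f x - p.1 x|) = ⨆ x, |p.1 x - f x|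
          simp only [abs_sub_comm]
        · exact hGS.2.2 p hp q hq
    have hsub : insert (f, z) G ⊆ G := hGmax.2 hG' (Set.subset_insert _ _)
    exact hne z (hsub (Set.mem_insert _ _))
  choose! j hj using htot
  -- exact distances to the canonical points
  have hexact : ∀ f ∈ TightSpan X, ∀ x, dist (j f) (ι x) = f x := by
    intro f hf x
    have hle : dist (j f) (ι x) ≤ f x := hGS.2.1 _ (hj f hf) x
    refine le_antisymm hle ?_
    refine le_of_forall_pos_le_add fun ε hε => ?_
    obtain ⟨y, hy⟩ := ts_exists hf x hε
    have h1 : dist (j f) (ι y) ≤ f y := hGS.2.1 _ (hj f hf) y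
    have h2 : dist (ι x) (ι y) ≤ dist (j f) (ι x) + dist (j f) (ι y) :=
      dist_triangle_left _ _ _
    rw [hι.dist_eq] at h2
    linarith
  refine ⟨j, ?_, ?_⟩
  · intro f hf g hg
    refine le_antisymm (hGS.2.2 _ (hj f hf) _ (hj g hg)) ?_
    refine ciSup_le fun x => ?_
    rw [← hexact f hf x, ← hexact g hg x]
    exact abs_dist_sub_le _ _ _
  · intro x
    have hfx : (fun z => dist x z) ∈ TightSpan X := by
      constructor
      · intro y z
        exact dist_triangle_left y z x
      · intro y
        refine le_antisymm ?_ (le_ciInf fun z => ?_)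
        · have hbdd : BddBelow (Set.range fun z => dist x y + dist x z - dist y z) := by
            refine ⟨0, ?_⟩
            rintro _ ⟨z, rfl⟩
            have := dist_triangle_left y z x
            show (0:ℝ) ≤ dist x y + dist x z - dist y z
            linarith
          have h := ciInf_le hbdd x
          simpa [dist_comm] using h
        · have := dist_triangle_left y z x
          show (0:ℝ) ≤ dist x y + dist x z - dist y z
          linarith
    have h0 := hexact _ hfx x
    simp only [dist_self] at h0
    exact eq_of_dist_eq_zero h0
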